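/- Let n ≥ 1, let U ⊆ ℝⁿ be open, let f : U → ℝ be a C² function and let u : U → ℝ be a C³ function. Then at every point of U, div(u·(Hess u)·∇f) = u·⟨∇(Δu), ∇f⟩ + u·⟨Hess u, Hess f⟩_F + (1/2)·⟨∇(|∇u|²), ∇f⟩. -/

import Mathlib

open scoped BigOperators

/-- Partial derivative `∂ᵢ v` of a scalar function on `ℝⁿ = Fin n → ℝ`. -/
noncomputable def pd {n : ℕ} (i : Fin n) (v : (Fin n → ℝ) → ℝ) (x : Fin n → ℝ) : ℝ :=
  fderiv ℝ v x (Pi.single i 1)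

/-- Gradient `∇v`. -/
noncomputable def grad {n : ℕ} (v : (Fin n → ℝ) → ℝ) (x : Fin n → ℝ) : Fin n → ℝ :=
  fun i => pd i v x

/-- Hessian matrix `(∂ᵢ∂ⱼ v)ᵢⱼ`. -/
noncomputable def hess {n : ℕ} (v : (Fin n → ℝ) → ℝ) (x : Fin n → ℝ) :
    Matrix (Fin n) (Fin n) ℝ :=
  fun i j => pd i (fun y => pd j v y) x

/-- Laplacian `Δv = tr (Hess v)`. -/
noncomputable def lap {n : ℕ} (v : (Fin n → ℝ) → ℝ) (x : Fin n → ℝ) : ℝ :=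
  ∑ i, hess v x i i

/-- Divergence of a vector field. -/
noncomputable def divg {n : ℕ} (X : (Fin n → ℝ) → (Fin n → ℝ)) (x : Fin n → ℝ) : ℝ :=
  ∑ i, pd i (fun y => X y i) x

/-- Euclidean inner product. -/
def dotp {n : ℕ} (a b : Fin n → ℝ) : ℝ := ∑ i, a i * b i

/-- Frobenius inner product of matrices. -/
def frobInner {n : ℕ} (A B : Matrix (Fin n) (Fin n) ℝ) : ℝ := ∑ i, ∑ j, A i j * B i j

/-- Squared Frobenius norm of a matrix. -/
def frobSq {n : ℕ} (A : Matrix (Fin n) (Fin n) ℝ) : ℝ := ∑ i, ∑ j, (A i j) ^ 2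

/-!
Both sides are expanded into second- and third-order partial derivatives. The product rule gives
`div (u • Hess u ∇f) = ⟨∇u, Hess u ∇f⟩ + u (⟨div Hess u, ∇f⟩ + ⟨Hess u, Hess f⟩_F)`.
In flat space third derivatives commute, so `div Hess u = ∇Δu`; and `∇|∇u|² = 2 Hess u ∇u`,
which together with the symmetry of the Hessian turns `⟨∇u, Hess u ∇f⟩` into `½ ⟨∇|∇u|², ∇f⟩`.
-/

section PartialDerivatives

variable {n : ℕ} {v w : (Fin n → ℝ) → ℝ} {x : Fin n → ℝ}

lemma pd_congr (h : v =ᶠ[nhds x] w) (i : Fin n) : pd i v x = pd i w x := by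
  unfold pd; rw [h.fderiv_eq]

lemma pd_mul (hv : DifferentiableAt ℝ v x) (hw : DifferentiableAt ℝ w x) (i : Fin n) :
    pd i (fun y => v y * w y) x = pd i v x * w x + v x * pd i w x := by
  simp only [pd, fderiv_fun_mul hv hw, add_apply, smul_apply, smul_eq_mul]
  ring

lemma pd_sum {ι : Type*} {s : Finset ι} {g : ι → (Fin n → ℝ) → ℝ}
    (hg : ∀ j ∈ s, DifferentiableAt ℝ (g j) x) (i : Fin n) :
    pd i (fun y => ∑ j ∈ s, g j y) x = ∑ j ∈ s, pd i (g j) x := by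
  simp only [pd, fderiv_fun_sum hg, sum_apply]

lemma ContDiffAt.contDiffAt_pd {m k : WithTop ℕ∞} (h : ContDiffAt ℝ k v x) (hmk : m + 1 ≤ k)
    (j : Fin n) : ContDiffAt ℝ m (pd j v) x := by
  exact (ContinuousLinearMap.apply ℝ ℝ (Pi.single j (1 : ℝ))).contDiff.contDiffAt.comp x
    (h.fderiv_right hmk)

lemma ContDiffAt.differentiableAt_pd {k : WithTop ℕ∞} (h : ContDiffAt ℝ k v x) (hk : 2 ≤ k)
    (j : Fin n) : DifferentiableAt ℝ (pd j v) x :=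
  (h.contDiffAt_pd (m := 1) (by simpa [one_add_one_eq_two] using hk) j).differentiableAt
    one_ne_zero

lemma ContDiffAt.differentiableAt_hess_apply (h : ContDiffAt ℝ 3 v x) (i j : Fin n) :
    DifferentiableAt ℝ (fun y => hess v y i j) x :=
  (h.contDiffAt_pd (m := 2) (by norm_num) j).differentiableAt_pd le_rfl i

lemma pd_pd_eq_fderiv_fderiv (h : DifferentiableAt ℝ (fderiv ℝ v) x) (i j : Fin n) :
    pd i (pd j v) x = fderiv ℝ (fderiv ℝ v) x (Pi.single i 1) (Pi.single j 1) := by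
  unfold pd
  rw [fderiv_clm_apply h (differentiableAt_const _)]
  simp

lemma hess_comm (h : ContDiffAt ℝ 2 v x) (i j : Fin n) : hess v x i j = hess v x j i := by
  have hd : DifferentiableAt ℝ (fderiv ℝ v) x :=
    (h.fderiv_right (m := 1) (by norm_num)).differentiableAt one_ne_zero
  simp only [hess, pd_pd_eq_fderiv_fderiv hd]
  exact h.isSymmSndFDerivAt (by simp [minSmoothness_of_isRCLikeNormedField]) _ _

lemma hess_isSymm (h : ContDiffAt ℝ 2 v x) : (hess v x).IsSymm :=
  Matrix.IsSymm.ext fun i j => hess_comm h j i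

lemma pd_hess_apply_comm (h : ContDiffAt ℝ 3 v x) (i j k : Fin n) :
    pd k (fun y => hess v y i j) x = pd i (fun y => hess v y k j) x := by
  have hj : ContDiffAt ℝ 2 (pd j v) x := h.contDiffAt_pd (by norm_num) j
  exact hess_comm hj k i

lemma pd_hess_apply_symm (h : ContDiffAt ℝ 3 v x) (i j k : Fin n) :
    pd k (fun y => hess v y i j) x = pd k (fun y => hess v y j i) x := by
  refine pd_congr ?_ k
  filter_upwards [h.eventually (by decide)] with y hy
  exact hess_comm (hy.of_le (by norm_num)) i j

end PartialDerivatives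

section VectorCalculus

open Matrix

variable {n : ℕ} {x : Fin n → ℝ}

lemma dotp_eq_dotProduct (a b : Fin n → ℝ) : dotp a b = a ⬝ᵥ b := rfl

lemma divg_smul {u : (Fin n → ℝ) → ℝ} {X : (Fin n → ℝ) → Fin n → ℝ}
    (hu : DifferentiableAt ℝ u x) (hX : ∀ i, DifferentiableAt ℝ (fun y => X y i) x) :
    divg (fun y => u y • X y) x = dotp (grad u x) (X x) + u x * divg X x := by
  simp only [divg, dotp, grad, Pi.smul_apply, smul_eq_mul, pd_mul hu (hX _),
    Finset.sum_add_distrib, Finset.mul_sum]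

lemma divg_mulVec {A : (Fin n → ℝ) → Matrix (Fin n) (Fin n) ℝ}
    {w : (Fin n → ℝ) → Fin n → ℝ}
    (hA : ∀ i j, DifferentiableAt ℝ (fun y => A y i j) x)
    (hw : ∀ j, DifferentiableAt ℝ (fun y => w y j) x) :
    divg (fun y => A y *ᵥ w y) x =
      dotp (fun j => divg (fun y i => A y i j) x) (w x)
        + frobInner (A x) (fun i j => pd i (fun y => w y j) x) := by
  have hrow : ∀ i, pd i (fun y => (A y *ᵥ w y) i) x
      = ∑ j, (pd i (fun y => A y i j) x * w x j + A x i j * pd i (fun y => w y j) x) := by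
    intro i
    refine (pd_sum (s := Finset.univ) (g := fun j y => A y i j * w y j)
      (fun j _ => (hA i j).mul (hw j)) i).trans ?_
    exact Finset.sum_congr rfl fun j _ => pd_mul (hA i j) (hw j) i
  simp only [divg, hrow, dotp, frobInner, Finset.sum_add_distrib, Finset.sum_mul]
  rw [Finset.sum_comm]

lemma differentiableAt_mulVec_apply {A : (Fin n → ℝ) → Matrix (Fin n) (Fin n) ℝ}
    {w : (Fin n → ℝ) → Fin n → ℝ}
    (hA : ∀ i j, DifferentiableAt ℝ (fun y => A y i j) x)
    (hw : ∀ j, DifferentiableAt ℝ (fun y => w y j) x) (i : Fin n) :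
    DifferentiableAt ℝ (fun y => (A y *ᵥ w y) i) x :=
  DifferentiableAt.fun_sum (u := Finset.univ) (A := fun j y => A y i j * w y j)
    fun j _ => (hA i j).mul (hw j)

lemma grad_lap {u : (Fin n → ℝ) → ℝ} (hu : ContDiffAt ℝ 3 u x) :
    grad (lap u) x = fun j => divg (fun y i => hess u y i j) x := by
  funext j
  change pd j (fun y => ∑ i, hess u y i i) x = _
  rw [pd_sum fun i _ => hu.differentiableAt_hess_apply i i]
  refine Finset.sum_congr rfl fun i _ => ?_
  rw [pd_hess_apply_comm hu, pd_hess_apply_symm hu]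

lemma grad_dotp_grad_self {u : (Fin n → ℝ) → ℝ} (hu : ContDiffAt ℝ 2 u x) :
    grad (fun y => dotp (grad u y) (grad u y)) x = (2 : ℝ) • (hess u x *ᵥ grad u x) := by
  have hdu : ∀ i, DifferentiableAt ℝ (pd i u) x := hu.differentiableAt_pd le_rfl
  funext j
  change pd j (fun y => ∑ i, pd i u y * pd i u y) x = 2 * ∑ i, hess u x j i * grad u x i
  rw [pd_sum (g := fun i y => pd i u y * pd i u y) fun i _ => (hdu i).mul (hdu i),
    Finset.mul_sum]
  refine Finset.sum_congr rfl fun i _ => ?_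
  rw [pd_mul (hdu i) (hdu i)]
  simp only [hess, grad]
  ring

end VectorCalculus

lemma divg_smul_hess_mulVec_grad {n : ℕ} {f u : (Fin n → ℝ) → ℝ} {x : Fin n → ℝ}
    (hf : ContDiffAt ℝ 2 f x) (hu : ContDiffAt ℝ 3 u x) :
    divg (fun y => u y • ((hess u y).mulVec (grad f y))) x =
      u x * dotp (grad (fun y => lap u y) x) (grad f x)
        + u x * frobInner (hess u x) (hess f x)
        + (1 / 2) * dotp (grad (fun y => dotp (grad u y) (grad u y)) x) (grad f x) := by
  have hH := hu.differentiableAt_hess_apply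
  have hgf : ∀ j, DifferentiableAt ℝ (fun y => grad f y j) x := hf.differentiableAt_pd le_rfl
  have hgrad_f_pd : (fun i j => pd i (fun y => grad f y j) x) = hess f x := rfl
  have hu2 : ContDiffAt ℝ 2 u x := hu.of_le (by norm_num)
  rw [divg_smul (hu.differentiableAt (by norm_num)) (differentiableAt_mulVec_apply hH hgf),
    divg_mulVec hH hgf, hgrad_f_pd, grad_lap hu, grad_dotp_grad_self hu2]
  simp only [dotp_eq_dotProduct, Matrix.dotProduct_mulVec, smul_dotProduct, smul_eq_mul]
  rw [← Matrix.mulVec_transpose, hess_isSymm hu2]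
  ring

theorem stmt8_general {n : ℕ} {U : Set (Fin n → ℝ)} (hU : IsOpen U)
    (f u : (Fin n → ℝ) → ℝ)
    (hf : ContDiffOn ℝ 2 f U) (hu : ContDiffOn ℝ 3 u U) :
    ∀ x ∈ U,
      divg (fun y => u y • ((hess u y).mulVec (grad f y))) x =
        u x * dotp (grad (fun y => lap u y) x) (grad f x)
        + u x * frobInner (hess u x) (hess f x)
        + (1 / 2) * dotp (grad (fun y => dotp (grad u y) (grad u y)) x) (grad f x) := fun _ hx =>
  divg_smul_hess_mulVec_grad (hf.contDiffAt (hU.mem_nhds hx)) (hu.contDiffAt (hU.mem_nhds hx))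

theorem stmt8 {n : ℕ} (hn : 1 ≤ n) {U : Set (Fin n → ℝ)} (hU : IsOpen U)
    (f u : (Fin n → ℝ) → ℝ)
    (hf : ContDiffOn ℝ 2 f U) (hu : ContDiffOn ℝ 3 u U) :
    ∀ x ∈ U,
      divg (fun y => u y • ((hess u y).mulVec (grad f y))) x =
        u x * dotp (grad (fun y => lap u y) x) (grad f x)
        + u x * frobInner (hess u x) (hess f x)
        + (1 / 2) * dotp (grad (fun y => dotp (grad u y) (grad u y)) x) (grad f x) :=
  stmt8_general hU f u hf hu
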